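/- Let a and Θ be Laurent polynomials over ℂ with Θ⋆ = Θ, and let n_b ≥ 1 be an integer such that (1−z)^{n_b}(1−z^{−1})^{n_b} divides Θ(z) − Θ(z²)a⋆(z)a(z) and (1−z^{−1})^{n_b}(1+z)^{n_b} divides Θ(z²)a⋆(z)a(−z), so that N_{a,Θ|n_b} is well defined. (i) If b₁, b₂ are Laurent polynomials such that {a; b₁, b₂}_{Θ,(1,−1)} is a quasi-tight framelet filter bank with vm(b₁) ≥ n_b and vm(b₂) ≥ n_b, and b̊_ℓ(z) := b_ℓ(z)/(1−z)^{n_b} for ℓ = 1, 2, then N_{a,Θ|n_b}(z) = W(z)⋆·diag(1,−1)·W(z), where W is the 2×2 matrix of Laurent polynomials with entries W_{ℓ,1} = b̊_ℓ^{[0]} and W_{ℓ,2} = b̊_ℓ^{[1]} for ℓ = 1, 2. (ii) Conversely, if V is a 2×2 matrix of Laurent polynomials with N_{a,Θ|n_b}(z) = V(z)⋆·diag(1,−1)·V(z), then setting b_ℓ(z) := (1−z)^{n_b}·(V_{ℓ,1}(z²) + z·V_{ℓ,2}(z²)) for ℓ = 1, 2, the family {a; b₁, b₂}_{Θ,(1,−1)}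 is a quasi-tight framelet filter bank with vm(b₁) ≥ n_b and vm(b₂) ≥ n_b. -/

import Mathlib

open LaurentPolynomial Matrix
open scoped Classical

noncomputable section

abbrev LP := LaurentPolynomial ℂ

namespace QT

/-- The coefficient of `z^k` in a Laurent polynomial. -/
def coeff (u : LP) (k : ℤ) : ℂ := (AddMonoidAlgebra.coeff u) k

/-- The Hermitian conjugate `u⋆(z) = Σ conj(u(k)) z^{-k}`. -/
def hstar (u : LP) : LP :=
  AddMonoidAlgebra.ofCoeff
    (Finsupp.mapDomain (fun k => -k)
      (Finsupp.mapRange (starRingEnd ℂ) (map_zero _) (AddMonoidAlgebra.coeff u)))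

/-- `u` has symmetry with type `ε z^c`, i.e. `u(k) = ε u(c-k)` for all `k`. -/
def SymT (u : LP) (ε : ℂ) (c : ℤ) : Prop := ∀ k : ℤ, coeff u k = ε * coeff u (c - k)

def Sgn (ε : ℂ) : Prop := ε = 1 ∨ ε = -1

/-- `u` has symmetry (with some type). -/
def HasSym (u : LP) : Prop := ∃ ε c, Sgn ε ∧ SymT u ε c

/-- The Laurent polynomial `z - a`. -/
def zsub (a : ℂ) : LP := T 1 - LaurentPolynomial.C a

/-- `m` is the multiplicity of `z₀` as a zero of `u`. -/
def mzIs (u : LP) (z₀ : ℂ) (m : ℕ) : Prop := zsub z₀ ^ m ∣ u ∧ ¬ zsub z₀ ^ (m + 1) ∣ u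

/-- The multiplicity of `z₀` as a zero of `u`, as a function. -/
def mzF (u : LP) (z₀ : ℂ) : ℕ := sSup {m : ℕ | zsub z₀ ^ m ∣ u}

/-- The difference-of-(Hermitian)-squares property with respect to symmetry type `ε z^c`. -/
def DOS (u : LP) (ε : ℂ) (c : ℤ) : Prop :=
  ∃ (u₁ u₂ : LP) (ε₁ ε₂ : ℂ) (c₁ c₂ : ℤ),
    Sgn ε₁ ∧ Sgn ε₂ ∧ SymT u₁ ε₁ c₁ ∧ SymT u₂ ε₂ c₂ ∧
    u₁ * hstar u₁ - u₂ * hstar u₂ = u ∧ ε₁ * ε₂ = ε ∧ c₁ - c₂ = c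

/-- Degree: the largest exponent with nonzero coefficient (0 for the zero polynomial). -/
def degL (u : LP) : ℤ :=
  if h : u = 0 then 0
  else (AddMonoidAlgebra.coeff u).support.max' (Finsupp.support_nonempty_iff.mpr
    (fun h' => h (AddMonoidAlgebra.coeff_injective (by rw [h']; rfl))))

/-- Lower degree: the smallest exponent with nonzero coefficient (0 for zero). -/
def ldegL (u : LP) : ℤ :=
  if h : u = 0 then 0
  else (AddMonoidAlgebra.coeff u).support.min' (Finsupp.support_nonempty_iff.mpr
    (fun h' => h (AddMonoidAlgebra.coeff_injective (by rw [h']; rfl))))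

/-- Length `deg - ldeg`, with `len 0 = ⊥`. -/
def lenL (u : LP) : WithBot ℤ := if u = 0 then ⊥ else ((degL u - ldegL u : ℤ) : WithBot ℤ)

/-- `g` is a greatest common divisor of `a` and `b`. -/
def IsGCD2 (g a b : LP) : Prop := g ∣ a ∧ g ∣ b ∧ ∀ e : LP, e ∣ a → e ∣ b → e ∣ g

/-- `g` is a greatest common divisor of `a`, `b`, `c`, `d`. -/
def IsGCD4 (g a b c d : LP) : Prop :=
  g ∣ a ∧ g ∣ b ∧ g ∣ c ∧ g ∣ d ∧ ∀ e : LP, e ∣ a → e ∣ b → e ∣ c → e ∣ d → e ∣ g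

/-- The Hermitian conjugate transpose of a matrix of Laurent polynomials. -/
def hstarM (A : Matrix (Fin 2) (Fin 2) LP) : Matrix (Fin 2) (Fin 2) LP :=
  fun i j => hstar (A j i)

def IsHerm (A : Matrix (Fin 2) (Fin 2) LP) : Prop := hstarM A = A

/-- `diag(1, -1)`. -/
def Jmat : Matrix (Fin 2) (Fin 2) LP := Matrix.diagonal ![1, -1]

/-- A square matrix of Laurent polynomials is strongly invertible if its determinant is a
nonzero monomial. -/
def StrongInv (A : Matrix (Fin 2) (Fin 2) LP) : Prop :=
  ∃ (lam : ℂ) (k : ℤ), lam ≠ 0 ∧ A.det = LaurentPolynomial.C lam * T k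

/-- Compatible symmetry for a `2×2` matrix of Laurent polynomials. -/
def CompatSym (A : Matrix (Fin 2) (Fin 2) LP) : Prop :=
  ∃ (ε ε' : Fin 2 → ℂ) (c c' : Fin 2 → ℤ),
    (∀ j, Sgn (ε j)) ∧ (∀ k, Sgn (ε' k)) ∧
    ∀ j k, SymT (A j k) (ε j * ε' k) (c' k - c j)

/-- Substitution `z ↦ z²`. -/
def sqDom (u : LP) : LP :=
  AddMonoidAlgebra.ofCoeff (Finsupp.mapDomain (fun k => 2 * k) (AddMonoidAlgebra.coeff u))

/-- Substitution `z ↦ -z`. -/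
def negSub (u : LP) : LP :=
  (AddMonoidAlgebra.coeff u).sum fun k c =>
    (AddMonoidAlgebra.ofCoeff (Finsupp.single k ((-1 : ℂ) ^ k * c)) : LP)

/-- The `γ`-coset `u^{[γ]}(z) = Σ_k u(γ + 2k) z^k`. -/
def cosetL (u : LP) (γ : ℤ) : LP :=
  AddMonoidAlgebra.ofCoeff
    (Finsupp.comapDomain (fun k : ℤ => γ + 2 * k) (AddMonoidAlgebra.coeff u)
      (by intro a _ b _ h; simp only at h; omega))

/-- Evaluation of a Laurent polynomial at a point. -/
def evalL (u : LP) (z : ℂ) : ℂ := (AddMonoidAlgebra.coeff u).sum fun k c => c * z ^ k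

/-- `{a; b₁, b₂}_{Θ,(1,-1)}` is a quasi-tight framelet filter bank. -/
def QTFB (a Θ b₁ b₂ : LP) : Prop :=
  sqDom Θ * hstar a * a + hstar b₁ * b₁ - hstar b₂ * b₂ = Θ ∧
  sqDom Θ * hstar a * negSub a + hstar b₁ * negSub b₁ - hstar b₂ * negSub b₂ = 0

/-- The matrix `N_{a,Θ|n_b}` built from the quotients `A`, `B`. -/
def Nmat (A B : LP) : Matrix (Fin 2) (Fin 2) LP :=
  LaurentPolynomial.C (2 : ℂ)⁻¹ •
    !![cosetL A 0 + cosetL B 0, cosetL A 1 - cosetL B 1;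
       T 1 * (cosetL A 1 + cosetL B 1), cosetL A 0 - cosetL B 0]


/-!
Write `b̊(z) = b̊^{[0]}(z²) + z b̊^{[1]}(z²)`. Then `b̊⋆ b̊` and `b̊⋆ b̊(-·)` have cosets that are
sums of products `(b̊^{[i]})⋆ b̊^{[j]}`, and the four entries of `N` are exactly the combinations of
cosets of `(A, B)` that isolate these products; so `N(b̊₁⋆b̊₁ - b̊₂⋆b̊₂, b̊₁⋆b̊₁(-·) - b̊₂⋆b̊₂(-·)) = W⋆ J W`.
Moreover `N` is injective, since the cosets of `A` and `B` can be read off its entries. Both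
directions then reduce to the observation that, after cancelling the nonzero factors
`(1-z)^{n_b}(1-z⁻¹)^{n_b}` and `(1-z⁻¹)^{n_b}(1+z)^{n_b}`, the filter bank identities for
`b_ℓ = (1-z)^{n_b} b̊_ℓ` say precisely that `(A, B)` is this pair.
-/

section LaurentPolynomial

variable {R : Type*} [Semiring R]

theorem coeff_T_self (n : ℤ) : (T n : R[T;T⁻¹]).coeff n = 1 := by
  rw [T, AddMonoidAlgebra.coeff_single, Finsupp.single_eq_same]

theorem coeff_T_of_ne {m n : ℤ} (h : m ≠ n) : (T n : R[T;T⁻¹]).coeff m = 0 := by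
  rw [T, AddMonoidAlgebra.coeff_single, Finsupp.single_eq_of_ne h]

theorem coeff_T_mul (n : ℤ) (u : R[T;T⁻¹]) (k : ℤ) : (T n * u).coeff k = u.coeff (k - n) := by
  rw [T, AddMonoidAlgebra.coeff_single_mul_apply, one_mul, neg_add_eq_sub]

theorem T_one_mul_T_neg_one : (T 1 * T (-1) : R[T;T⁻¹]) = 1 := by
  rw [← T_add, add_neg_cancel, T_zero]

theorem one_add_T_ne_zero [Nontrivial R] {n : ℤ} (hn : n ≠ 0) : (1 + T n : R[T;T⁻¹]) ≠ 0 :=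
  fun h => by
    have := congrArg (fun p : R[T;T⁻¹] => p.coeff n) h
    simp only [← T_zero, AddMonoidAlgebra.coeff_add, Finsupp.add_apply, coeff_T_self,
      coeff_T_of_ne hn, zero_add, AddMonoidAlgebra.coeff_zero, Finsupp.coe_zero,
      Pi.zero_apply] at this
    exact one_ne_zero this

theorem map_mul_of_single_mul_single {M S : Type*} [AddMonoid M] [Semiring S]
    (F : AddMonoidAlgebra R M →+ S)
    (h : ∀ m n (x y : R), F (.single m x * .single n y) = F (.single m x) * F (.single n y))
    (u v : AddMonoidAlgebra R M) : F (u * v) = F u * F v := by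
  induction u using AddMonoidAlgebra.induction_linear with
  | zero => simp
  | add u u' hu hu' => simp only [add_mul, map_add, hu, hu']
  | single m x =>
    induction v using AddMonoidAlgebra.induction_linear with
    | zero => simp
    | add v v' hv hv' => simp only [mul_add, map_add, hv, hv']
    | single n y => exact h m n x y

end LaurentPolynomial

theorem one_sub_T_ne_zero {R : Type*} [Ring R] [Nontrivial R] {n : ℤ} (hn : n ≠ 0) :
    (1 - T n : R[T;T⁻¹]) ≠ 0 := fun h => by
  have := congrArg (fun p : R[T;T⁻¹] => p.coeff n) (sub_eq_zero.mp h)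
  simp only [← T_zero, coeff_T_self, coeff_T_of_ne hn] at this
  exact zero_ne_one this

theorem C_inv_two_mul_two : (C (2⁻¹ : ℂ) : LP) * 2 = 1 := by
  rw [← map_ofNat C 2, ← map_mul, inv_mul_cancel₀ two_ne_zero, map_one]

def sqDomHom : LP →+* LP := AddMonoidAlgebra.mapDomainRingHom ℂ (AddMonoidHom.mulLeft 2)

@[simp] theorem sqDomHom_apply (u : LP) : sqDomHom u = sqDom u := rfl

def hstarHom : LP →+* LP :=
  (AddMonoidAlgebra.mapDomainRingHom ℂ negAddMonoidHom).comp
    (AddMonoidAlgebra.mapRingHom ℤ (starRingEnd ℂ))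

@[simp] theorem hstarHom_apply (u : LP) : hstarHom u = hstar u := rfl

theorem coeff_negSub (u : LP) (k : ℤ) : (negSub u).coeff k = (-1) ^ k * u.coeff k := by
  rw [negSub, AddMonoidAlgebra.coeff_finsuppSum, Finsupp.sum_apply]
  simp only [Finsupp.single_apply]
  exact Finsupp.sum_ite_eq' _ _ _ |>.trans (by simp +contextual)

theorem negSub_single (k : ℤ) (c : ℂ) : negSub (.single k c) = .single k ((-1) ^ k * c) := by
  rw [negSub, AddMonoidAlgebra.coeff_single]
  exact Finsupp.sum_single_index (by simp)

def negSubAddHom : LP →+ LP where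
  toFun := negSub
  map_zero' := LaurentPolynomial.ext fun k => by simp [coeff_negSub]
  map_add' u v := LaurentPolynomial.ext fun k => by simp [coeff_negSub, mul_add]

def negSubHom : LP →+* LP :=
  { negSubAddHom with
    map_one' := by
      change negSub _ = _
      rw [← single_zero_one_eq_one, negSub_single, zpow_zero, one_mul]
    map_mul' := map_mul_of_single_mul_single negSubAddHom fun m n x y => by
      change negSub _ = negSub _ * negSub _
      rw [AddMonoidAlgebra.single_mul_single, negSub_single, negSub_single, negSub_single,
        AddMonoidAlgebra.single_mul_single, zpow_add₀ (by norm_num)]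
      ring_nf }

@[simp] theorem negSubHom_apply (u : LP) : negSubHom u = negSub u := rfl

theorem coeff_sqDom_two_mul (u : LP) (k : ℤ) : (sqDom u).coeff (2 * k) = u.coeff k :=
  Finsupp.mapDomain_apply (mul_right_injective₀ two_ne_zero) _ k

theorem coeff_sqDom_two_mul_add_one (u : LP) (k : ℤ) : (sqDom u).coeff (2 * k + 1) = 0 :=
  Finsupp.mapDomain_of_notMem_range _ _ fun ⟨m, hm⟩ => by simp only at hm; omega

theorem coeff_hstar (u : LP) (k : ℤ) : (hstar u).coeff k = starRingEnd ℂ (u.coeff (-k)) := by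
  rw [← neg_neg k]
  exact (Finsupp.mapDomain_apply neg_injective _ (-k)).trans (by simp)

theorem hstar_T (n : ℤ) : hstar (T n) = T (-n) := by
  change hstarHom (.single n 1) = _
  rw [hstarHom, RingHom.comp_apply, AddMonoidAlgebra.mapRingHom_single, map_one,
    AddMonoidAlgebra.mapDomainRingHom_apply, AddMonoidAlgebra.mapDomain_single]
  rfl

theorem sqDom_T (n : ℤ) : sqDom (T n) = T (2 * n) := AddMonoidAlgebra.mapDomain_single

theorem negSub_T_one : negSub (T 1) = -T 1 := by
  rw [T, negSub_single, zpow_one, neg_one_mul, AddMonoidAlgebra.single_neg]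

theorem hstar_sqDom (u : LP) : hstar (sqDom u) = sqDom (hstar u) :=
  LaurentPolynomial.ext fun k => by
    obtain ⟨m, rfl | rfl⟩ := Int.even_or_odd' k
    · rw [coeff_hstar, ← mul_neg, coeff_sqDom_two_mul, coeff_sqDom_two_mul, coeff_hstar]
    · rw [coeff_hstar, show -(2 * m + 1) = 2 * (-m - 1) + 1 by ring, coeff_sqDom_two_mul_add_one,
        coeff_sqDom_two_mul_add_one, map_zero]

theorem negSub_sqDom (u : LP) : negSub (sqDom u) = sqDom u :=
  LaurentPolynomial.ext fun k => by
    obtain ⟨m, rfl | rfl⟩ := Int.even_or_odd' k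
    · rw [coeff_negSub, _root_.zpow_mul]
      norm_num
    · rw [coeff_negSub, coeff_sqDom_two_mul_add_one, mul_zero]

theorem coeff_cosetL (u : LP) (γ k : ℤ) : (cosetL u γ).coeff k = u.coeff (γ + 2 * k) := rfl

theorem cosetL_sub (u v : LP) (γ : ℤ) : cosetL (u - v) γ = cosetL u γ - cosetL v γ :=
  LaurentPolynomial.ext fun _ => rfl

def ofCosets (x y : LP) : LP := sqDom x + T 1 * sqDom y

theorem cosetL_ofCosets_zero (x y : LP) : cosetL (ofCosets x y) 0 = x :=
  LaurentPolynomial.ext fun k => by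
    rw [coeff_cosetL, ofCosets, AddMonoidAlgebra.coeff_add, Finsupp.add_apply, coeff_T_mul,
      zero_add, coeff_sqDom_two_mul, show 2 * k - 1 = 2 * (k - 1) + 1 by ring,
      coeff_sqDom_two_mul_add_one, add_zero]

theorem cosetL_ofCosets_one (x y : LP) : cosetL (ofCosets x y) 1 = y :=
  LaurentPolynomial.ext fun k => by
    rw [coeff_cosetL, ofCosets, AddMonoidAlgebra.coeff_add, Finsupp.add_apply, coeff_T_mul,
      add_comm 1, coeff_sqDom_two_mul_add_one, add_sub_cancel_right, coeff_sqDom_two_mul, zero_add]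

theorem ofCosets_cosetL (u : LP) : ofCosets (cosetL u 0) (cosetL u 1) = u :=
  LaurentPolynomial.ext fun k => by
    rw [ofCosets, AddMonoidAlgebra.coeff_add, Finsupp.add_apply, coeff_T_mul]
    obtain ⟨m, rfl | rfl⟩ := Int.even_or_odd' k
    · rw [coeff_sqDom_two_mul, show 2 * m - 1 = 2 * (m - 1) + 1 by ring,
        coeff_sqDom_two_mul_add_one, add_zero, coeff_cosetL, zero_add]
    · rw [coeff_sqDom_two_mul_add_one, add_sub_cancel_right, coeff_sqDom_two_mul, zero_add,
        coeff_cosetL, add_comm]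

theorem negSub_ofCosets (x y : LP) : negSub (ofCosets x y) = ofCosets x (-y) := by
  rw [ofCosets, ofCosets, ← sqDomHom_apply (-y), map_neg, ← negSubHom_apply, map_add, map_mul]
  simp only [negSubHom_apply, sqDomHom_apply, negSub_sqDom, negSub_T_one]
  ring

theorem hstar_mul_eq_ofCosets (v w : LP) :
    hstar v * w =
      ofCosets (hstar (cosetL v 0) * cosetL w 0 + hstar (cosetL v 1) * cosetL w 1)
        (hstar (cosetL v 0) * cosetL w 1 + T (-1) * (hstar (cosetL v 1) * cosetL w 0)) := by
  conv_lhs => rw [← ofCosets_cosetL v, ← ofCosets_cosetL w]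
  simp only [ofCosets, ← sqDomHom_apply, ← hstarHom_apply, map_add, map_mul]
  simp only [hstarHom_apply, sqDomHom_apply, hstar_sqDom, hstar_T, sqDom_T]
  rw [show (T (2 * -1) : LP) = T (-1) * T (-1) by rw [← T_add]; norm_num]
  linear_combination sqDom (hstar (cosetL v 1)) *
    (sqDom (cosetL w 1) - T (-1) * sqDom (cosetL w 0)) * T_one_mul_T_neg_one (R := ℂ)

theorem Nmat_hstar_mul (v w : LP) :
    Nmat (hstar v * w) (hstar v * negSub w) =
      !![hstar (cosetL v 0) * cosetL w 0, hstar (cosetL v 0) * cosetL w 1;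
         hstar (cosetL v 1) * cosetL w 0, hstar (cosetL v 1) * cosetL w 1] := by
  have hneg : negSub w = ofCosets (cosetL w 0) (-cosetL w 1) := by
    conv_lhs => rw [← ofCosets_cosetL w]
    exact negSub_ofCosets _ _
  rw [hneg, hstar_mul_eq_ofCosets v w, hstar_mul_eq_ofCosets v (ofCosets _ _)]
  simp only [Nmat, cosetL_ofCosets_zero, cosetL_ofCosets_one]
  refine Matrix.ext fun i j => ?_
  fin_cases i <;> fin_cases j <;>
    simp only [Matrix.smul_apply, smul_eq_mul, of_apply, cons_val', cons_val_zero, cons_val_one,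
      cons_val_fin_one, Fin.isValue, Fin.zero_eta, Fin.mk_one]
  · linear_combination hstar (cosetL v 0) * cosetL w 0 * C_inv_two_mul_two
  · linear_combination hstar (cosetL v 0) * cosetL w 1 * C_inv_two_mul_two
  · linear_combination hstar (cosetL v 1) * cosetL w 0 *
      (T (-1) * T 1 * C_inv_two_mul_two + T_one_mul_T_neg_one (R := ℂ))
  · linear_combination hstar (cosetL v 1) * cosetL w 1 * C_inv_two_mul_two

theorem Nmat_sub (A B A' B' : LP) : Nmat (A - A') (B - B') = Nmat A B - Nmat A' B' := by
  simp only [Nmat, cosetL_sub, ← smul_sub]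
  congr 1
  refine Matrix.ext fun i j => ?_
  fin_cases i <;> fin_cases j <;>
    simp only [Matrix.sub_apply, of_apply, cons_val', cons_val_zero, cons_val_one, cons_val_fin_one,
      Fin.isValue, Fin.zero_eta, Fin.mk_one] <;>
    ring

def polyphaseMat (b₁ b₂ : LP) : Matrix (Fin 2) (Fin 2) LP :=
  !![cosetL b₁ 0, cosetL b₁ 1; cosetL b₂ 0, cosetL b₂ 1]

theorem polyphaseMat_ofCosets (V : Matrix (Fin 2) (Fin 2) LP) :
    polyphaseMat (ofCosets (V 0 0) (V 0 1)) (ofCosets (V 1 0) (V 1 1)) = V := by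
  rw [polyphaseMat, cosetL_ofCosets_zero, cosetL_ofCosets_one, cosetL_ofCosets_zero,
    cosetL_ofCosets_one, ← Matrix.eta_fin_two V]

theorem Nmat_eq_hstarM_mul_Jmat_mul (c₁ c₂ : LP) :
    Nmat (hstar c₁ * c₁ - hstar c₂ * c₂) (hstar c₁ * negSub c₁ - hstar c₂ * negSub c₂) =
      hstarM (polyphaseMat c₁ c₂) * Jmat * polyphaseMat c₁ c₂ := by
  rw [Nmat_sub, Nmat_hstar_mul, Nmat_hstar_mul]
  refine Matrix.ext fun i j => ?_
  fin_cases i <;> fin_cases j <;>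
    simp only [hstarM, Jmat, polyphaseMat, Matrix.mul_apply, Fin.sum_univ_two, Matrix.sub_apply,
      of_apply, cons_val', cons_val_zero, cons_val_one, cons_val_fin_one, Fin.isValue, Fin.zero_eta,
      Fin.mk_one, diagonal_apply_eq, diagonal_apply_ne, ne_eq, one_ne_zero, zero_ne_one,
      not_false_eq_true, mul_one, mul_zero, add_zero] <;>
    ring

theorem ofCosets_Nmat_fst (A B : LP) :
    ofCosets (Nmat A B 0 0 + Nmat A B 1 1) (Nmat A B 0 1 + T (-1) * Nmat A B 1 0) = A := by
  conv_rhs => rw [← ofCosets_cosetL A]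
  simp only [Nmat, Matrix.smul_apply, smul_eq_mul, of_apply, cons_val', cons_val_zero,
    cons_val_one, cons_val_fin_one, Fin.isValue]
  congr 1
  · linear_combination cosetL A 0 * C_inv_two_mul_two
  · linear_combination cosetL A 1 * C_inv_two_mul_two +
      C (2⁻¹ : ℂ) * (cosetL A 1 + cosetL B 1) * T_one_mul_T_neg_one (R := ℂ)

theorem ofCosets_Nmat_snd (A B : LP) :
    ofCosets (Nmat A B 0 0 - Nmat A B 1 1) (T (-1) * Nmat A B 1 0 - Nmat A B 0 1) = B := by
  conv_rhs => rw [← ofCosets_cosetL B]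
  simp only [Nmat, Matrix.smul_apply, smul_eq_mul, of_apply, cons_val', cons_val_zero,
    cons_val_one, cons_val_fin_one, Fin.isValue]
  congr 1
  · linear_combination cosetL B 0 * C_inv_two_mul_two
  · linear_combination cosetL B 1 * C_inv_two_mul_two +
      C (2⁻¹ : ℂ) * (cosetL A 1 + cosetL B 1) * T_one_mul_T_neg_one (R := ℂ)

theorem Nmat_injective {A B A' B' : LP} (h : Nmat A B = Nmat A' B') : A = A' ∧ B = B' :=
  ⟨by rw [← ofCosets_Nmat_fst A B, h, ofCosets_Nmat_fst],
   by rw [← ofCosets_Nmat_snd A B, h, ofCosets_Nmat_snd]⟩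

theorem hstar_one_sub_T_pow_mul (n : ℕ) (u : LP) :
    hstar ((1 - T 1) ^ n * u) = (1 - T (-1)) ^ n * hstar u := by
  rw [← hstarHom_apply, map_mul, map_pow, map_sub, map_one, hstarHom_apply, hstar_T,
    hstarHom_apply]

theorem negSub_one_sub_T_pow_mul (n : ℕ) (u : LP) :
    negSub ((1 - T 1) ^ n * u) = (1 + T 1) ^ n * negSub u := by
  rw [← negSubHom_apply, map_mul, map_pow, map_sub, map_one, negSubHom_apply, negSub_T_one,
    sub_neg_eq_add, negSubHom_apply]

theorem QTFB_one_sub_T_pow_mul_iff {a Θ A B : LP} {n : ℕ}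
    (hA : Θ - sqDom Θ * hstar a * a = (1 - T 1) ^ n * (1 - T (-1)) ^ n * A)
    (hB : -(sqDom Θ * hstar a * negSub a) = (1 - T (-1)) ^ n * (1 + T 1) ^ n * B) (c₁ c₂ : LP) :
    QTFB a Θ ((1 - T 1) ^ n * c₁) ((1 - T 1) ^ n * c₂) ↔
      A = hstar c₁ * c₁ - hstar c₂ * c₂ ∧ B = hstar c₁ * negSub c₁ - hstar c₂ * negSub c₂ := by
  have h₁ : (1 - T 1 : LP) ≠ 0 := one_sub_T_ne_zero one_ne_zero
  have h₂ : (1 - T (-1) : LP) ≠ 0 := one_sub_T_ne_zero (by norm_num)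
  have h₃ : (1 + T 1 : LP) ≠ 0 := one_add_T_ne_zero one_ne_zero
  rw [QTFB, hstar_one_sub_T_pow_mul, hstar_one_sub_T_pow_mul, negSub_one_sub_T_pow_mul,
    negSub_one_sub_T_pow_mul]
  refine and_congr (Iff.trans ?_ (mul_right_inj' (mul_ne_zero (pow_ne_zero n h₁) (pow_ne_zero n h₂))))
    (Iff.trans ?_ (mul_right_inj' (mul_ne_zero (pow_ne_zero n h₂) (pow_ne_zero n h₃))))
  · rw [← hA]
    constructor <;> intro h <;> linear_combination -h
  · rw [← hB]
    constructor <;> intro h <;> linear_combination -h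

theorem T_one_sub_one_pow_dvd (n : ℕ) (u : LP) : (T 1 - 1 : LP) ^ n ∣ (1 - T 1) ^ n * u :=
  (pow_dvd_pow_of_dvd (dvd_sub_comm.mp dvd_rfl) n).mul_right u

theorem quasi_tight_framelet_construction_scheme_general
    (a Θ : LP) (nb : ℕ) :
    ∀ A B : LP,
      Θ - sqDom Θ * hstar a * a = (1 - T 1) ^ nb * (1 - T (-1)) ^ nb * A →
      -(sqDom Θ * hstar a * negSub a) = (1 - T (-1)) ^ nb * (1 + T 1) ^ nb * B →
      ((∀ b₁ b₂ : LP, QTFB a Θ b₁ b₂ →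
          (T 1 - 1 : LP) ^ nb ∣ b₁ → (T 1 - 1 : LP) ^ nb ∣ b₂ →
          ∀ bb₁ bb₂ : LP, b₁ = (1 - T 1) ^ nb * bb₁ → b₂ = (1 - T 1) ^ nb * bb₂ →
            Nmat A B =
              hstarM !![cosetL bb₁ 0, cosetL bb₁ 1; cosetL bb₂ 0, cosetL bb₂ 1] * Jmat *
                !![cosetL bb₁ 0, cosetL bb₁ 1; cosetL bb₂ 0, cosetL bb₂ 1]) ∧
       (∀ V : Matrix (Fin 2) (Fin 2) LP, Nmat A B = hstarM V * Jmat * V →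
          QTFB a Θ ((1 - T 1) ^ nb * (sqDom (V 0 0) + T 1 * sqDom (V 0 1)))
            ((1 - T 1) ^ nb * (sqDom (V 1 0) + T 1 * sqDom (V 1 1))) ∧
          (T 1 - 1 : LP) ^ nb ∣ (1 - T 1) ^ nb * (sqDom (V 0 0) + T 1 * sqDom (V 0 1)) ∧
          (T 1 - 1 : LP) ^ nb ∣ (1 - T 1) ^ nb * (sqDom (V 1 0) + T 1 * sqDom (V 1 1)))) := by
  intro A B hA hB
  refine ⟨fun b₁ b₂ hQ _ _ c₁ c₂ h₁ h₂ => ?_, fun V hV => ?_⟩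
  · subst h₁ h₂
    obtain ⟨rfl, rfl⟩ := (QTFB_one_sub_T_pow_mul_iff hA hB c₁ c₂).mp hQ
    exact Nmat_eq_hstarM_mul_Jmat_mul c₁ c₂
  · have hN := Nmat_eq_hstarM_mul_Jmat_mul (ofCosets (V 0 0) (V 0 1)) (ofCosets (V 1 0) (V 1 1))
    rw [polyphaseMat_ofCosets, ← hV] at hN
    exact ⟨(QTFB_one_sub_T_pow_mul_iff hA hB _ _).mpr (Nmat_injective hN.symm),
      T_one_sub_one_pow_dvd nb _, T_one_sub_one_pow_dvd nb _⟩

/-- the general construction scheme for quasi-tight framelet filter banks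
(Theorem 4.1 of the paper). -/
theorem quasi_tight_framelet_construction_scheme
    (a Θ : LP) (hΘstar : hstar Θ = Θ) (nb : ℕ) (hnb : 1 ≤ nb)
    (hd1 : ((1 - T 1 : LP)) ^ nb * (1 - T (-1)) ^ nb ∣ Θ - sqDom Θ * hstar a * a)
    (hd2 : ((1 - T (-1) : LP)) ^ nb * (1 + T 1) ^ nb ∣ sqDom Θ * hstar a * negSub a) :
    ∀ A B : LP,
      Θ - sqDom Θ * hstar a * a = (1 - T 1) ^ nb * (1 - T (-1)) ^ nb * A →
      -(sqDom Θ * hstar a * negSub a) = (1 - T (-1)) ^ nb * (1 + T 1) ^ nb * B →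
      ((∀ b₁ b₂ : LP, QTFB a Θ b₁ b₂ →
          (T 1 - 1 : LP) ^ nb ∣ b₁ → (T 1 - 1 : LP) ^ nb ∣ b₂ →
          ∀ bb₁ bb₂ : LP, b₁ = (1 - T 1) ^ nb * bb₁ → b₂ = (1 - T 1) ^ nb * bb₂ →
            Nmat A B =
              hstarM !![cosetL bb₁ 0, cosetL bb₁ 1; cosetL bb₂ 0, cosetL bb₂ 1] * Jmat *
                !![cosetL bb₁ 0, cosetL bb₁ 1; cosetL bb₂ 0, cosetL bb₂ 1]) ∧
       (∀ V : Matrix (Fin 2) (Fin 2) LP, Nmat A B = hstarM V * Jmat * V →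
          QTFB a Θ ((1 - T 1) ^ nb * (sqDom (V 0 0) + T 1 * sqDom (V 0 1)))
            ((1 - T 1) ^ nb * (sqDom (V 1 0) + T 1 * sqDom (V 1 1))) ∧
          (T 1 - 1 : LP) ^ nb ∣ (1 - T 1) ^ nb * (sqDom (V 0 0) + T 1 * sqDom (V 0 1)) ∧
          (T 1 - 1 : LP) ^ nb ∣ (1 - T 1) ^ nb * (sqDom (V 1 0) + T 1 * sqDom (V 1 1)))) :=
  quasi_tight_framelet_construction_scheme_general a Θ nb

end QT
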